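/- arXiv:1709.05588 — 2 statements merged into one kernel-verified Lean document; each statement's English description precedes it below -/
import Mathlib

section
/- For any subset S of vertices of Q_n (n ≥ 2) with |S| = 2, the vertex boundary of S has at least 2n − 2 elements. -/
/-- The n-dimensional hypercube: vertices are `Fin n → Bool`,
adjacent iff Hamming distance exactly 1. -/
def Qn (n : ℕ) : SimpleGraph (Fin n → Bool) where
  Adj u v := hammingDist u v = 1
  symm := by constructor; intro u v h; rwa [hammingDist_comm]
  loopless := by constructor; intro u h; simp [hammingDist_self] at h

instance (n : ℕ) : DecidableRel (Qn n).Adj :=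
  fun u v => inferInstanceAs (Decidable (hammingDist u v = 1))

/-- Vertex boundary: vertices outside `S` adjacent to some vertex of `S`. -/
def vertexBoundary {V : Type*} (G : SimpleGraph V) (S : Set V) : Set V :=
  {v | v ∉ S ∧ ∃ u ∈ S, G.Adj u v}

/-!
Pick a coordinate `j` on which the two vertices `a`, `b` of `S` differ. Flipping any other
coordinate `i ≠ j` of `a` gives a neighbour of `a` that still agrees with `a` at `j`, hence lies
outside `S`; likewise for `b`. These `n - 1` neighbours of `a` and `n - 1` neighbours of `b` are
distinct, since they are separated by their value at `j`.
-/

open Finset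

variable {n : ℕ}

def flipAt (a : Fin n → Bool) (i : Fin n) : Fin n → Bool :=
  Function.update a i (!a i)

@[simp]
lemma flipAt_apply_self (a : Fin n → Bool) (i : Fin n) : flipAt a i i = !a i := by
  simp [flipAt]

lemma flipAt_apply_of_ne (a : Fin n → Bool) {i j : Fin n} (h : j ≠ i) : flipAt a i j = a j := by
  simp [flipAt, h]

lemma flipAt_ne_self (a : Fin n → Bool) (i : Fin n) : flipAt a i ≠ a :=
  fun h => by simpa using congrFun h i

lemma Qn_adj_flipAt (a : Fin n → Bool) (i : Fin n) : (Qn n).Adj a (flipAt a i) := by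
  change hammingDist _ _ = 1
  rw [hammingDist, card_eq_one]
  refine ⟨i, ?_⟩
  ext k
  by_cases h : k = i <;> simp [flipAt, Function.update, h]

lemma flipAt_injective (a : Fin n → Bool) : Function.Injective (flipAt a) := by
  intro i₁ i₂ h
  by_contra hne
  simpa [flipAt_apply_of_ne a hne] using congrFun h i₁

def flipsAvoiding (a : Fin n → Bool) (j : Fin n) : Finset (Fin n → Bool) :=
  (univ.erase j).image (flipAt a)

lemma card_flipsAvoiding (a : Fin n → Bool) (j : Fin n) : #(flipsAvoiding a j) = n - 1 := by
  rw [flipsAvoiding, card_image_of_injective _ (flipAt_injective a), card_erase_of_mem (mem_univ j),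
    card_univ, Fintype.card_fin]

lemma apply_eq_of_mem_flipsAvoiding {a v : Fin n → Bool} {j : Fin n}
    (hv : v ∈ flipsAvoiding a j) : v j = a j := by
  obtain ⟨i, hi, rfl⟩ := mem_image.mp hv
  exact flipAt_apply_of_ne a (mem_erase.mp hi).1.symm

lemma disjoint_flipsAvoiding {a b : Fin n → Bool} {j : Fin n} (hj : a j ≠ b j) :
    Disjoint (flipsAvoiding a j) (flipsAvoiding b j) :=
  disjoint_left.mpr fun _ ha hb =>
    hj ((apply_eq_of_mem_flipsAvoiding ha).symm.trans (apply_eq_of_mem_flipsAvoiding hb))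

lemma flipsAvoiding_subset_vertexBoundary {a b : Fin n → Bool} {j : Fin n} (hj : a j ≠ b j) :
    ↑(flipsAvoiding a j) ⊆ vertexBoundary (Qn n) {a, b} := by
  intro v hv
  have hvj := apply_eq_of_mem_flipsAvoiding hv
  obtain ⟨i, -, rfl⟩ := mem_image.mp hv
  refine ⟨?_, a, Set.mem_insert a {b}, Qn_adj_flipAt a i⟩
  rintro (h | h)
  · exact flipAt_ne_self a i h
  · exact hj (hvj.symm.trans (congrFun h j))

theorem boundary_of_pair_general (n : ℕ)
    (S : Set (Fin n → Bool)) (hS : S.ncard = 2) :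
    2 * n - 2 ≤ (vertexBoundary (Qn n) S).ncard := by
  obtain ⟨a, b, hab, rfl⟩ := Set.ncard_eq_two.mp hS
  obtain ⟨j, hj⟩ := Function.ne_iff.mp hab
  have hsub : ↑(flipsAvoiding a j ∪ flipsAvoiding b j) ⊆ vertexBoundary (Qn n) {a, b} := by
    rw [coe_union]
    refine Set.union_subset (flipsAvoiding_subset_vertexBoundary hj) ?_
    rw [Set.pair_comm]
    exact flipsAvoiding_subset_vertexBoundary (Ne.symm hj)
  calc 2 * n - 2 = #(flipsAvoiding a j ∪ flipsAvoiding b j) := by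
        rw [card_union_of_disjoint (disjoint_flipsAvoiding hj), card_flipsAvoiding,
          card_flipsAvoiding]
        omega
    _ ≤ _ := by
        rw [← Set.ncard_coe_finset]
        exact Set.ncard_le_ncard hsub

theorem boundary_of_pair (n : ℕ) (hn : 2 ≤ n)
    (S : Set (Fin n → Bool)) (hS : S.ncard = 2) :
    2 * n - 2 ≤ (vertexBoundary (Qn n) S).ncard :=
  boundary_of_pair_general n S hS
end

section
/- Let n ≥ 3 and 1 ≤ h ≤ n − 1. For all F_e ⊆ E(Q_n) with |F_e| ≤ h and all distinct F₁, F₂ ⊆ V(Q_n) with |F₁|, |F₂| ≤ n − h, there exists an edge of Q_n − F_e joining a vertex of V − (F₁ ∪ F₂) to a vertex of F₁ Δ F₂. In other words, Q_n is h-edge tolerable (n − h)-diagnosable under the PMC model. -/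
/-!
Put `S = F₁ ∆ F₂` and `C = F₁ ∩ F₂`. If every edge from `S` to a vertex outside `F₁ ∪ F₂` is
among the at most `h` deleted ones, then counting the `d * #S` edge-ends at `S` in a `d`-regular graph gives
`d * #S ≤ 2 e(S) + #S * #C + h`. In a bipartite graph `4 e(S) ≤ #S ^ 2`, and with
`a = #(F₁ \ F₂)`, `b = #(F₂ \ F₁)`, `a + #C + h ≤ d`, `b + #C + h ≤ d` this forces
`(a - b) ^ 2 + 2 h (a + b - 1) ≤ 0`, impossible once `a + b ≥ 1` and `h ≥ 1`.
The hypercube `Qn n` is `n`-regular, and bipartite by the parity of the number of `true`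
coordinates.
-/

open Finset

theorem sq_add_two_mul_add_two_mul_lt_two_mul {a b c d h : ℕ} (hab : 0 < a + b) (hh : 0 < h)
    (ha : a + c + h ≤ d) (hb : b + c + h ≤ d) :
    (a + b) ^ 2 + 2 * (a + b) * c + 2 * h < 2 * (a + b) * d := by
  have hda := Nat.mul_le_mul_left a ha
  have hdb := Nat.mul_le_mul_left b hb
  rcases lt_trichotomy a b with hlt | rfl | hgt
  · nlinarith [Nat.mul_le_mul_right (b - a) (show 1 ≤ b - a by omega), Nat.sub_add_cancel hlt.le]
  · nlinarith [Nat.mul_le_mul_right h (show 1 ≤ a by omega)]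
  · nlinarith [Nat.mul_le_mul_right (a - b) (show 1 ≤ a - b by omega), Nat.sub_add_cancel hgt.le]

namespace SimpleGraph

variable {V : Type*} {G : SimpleGraph V} [DecidableRel G.Adj]

theorem card_interedges_univ [Fintype V] (s : Finset V) :
    #(G.interedges s univ) = ∑ v ∈ s, G.degree v := by
  simp only [interedges_def, card_filter, sum_product, ← card_neighborFinset_eq_degree,
    neighborFinset_eq_filter]

theorem card_interedges_union_right [DecidableEq V] (s : Finset V) {t u : Finset V}
    (htu : Disjoint t u) :
    #(G.interedges s (t ∪ u)) = #(G.interedges s t) + #(G.interedges s u) := by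
  rw [← card_union_of_disjoint (G.interedges_disjoint_right s htu), interedges_def,
    interedges_def, interedges_def, product_union, filter_union]

theorem IsBipartite.two_mul_card_interedges_self_le (hG : G.IsBipartite) (s : Finset V) :
    2 * #(G.interedges s s) ≤ #s ^ 2 := by
  classical
  obtain ⟨X, Y, hXY⟩ := hG.exists_isBipartiteWith
  have hsub : G.interedges s s ⊆
      {v ∈ s | v ∈ X} ×ˢ {v ∈ s | v ∈ Y} ∪ {v ∈ s | v ∈ Y} ×ˢ {v ∈ s | v ∈ X} := by
    intro p hp
    obtain ⟨hp₁, hp₂, hadj⟩ := (mem_interedges_iff _).1 hp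
    rcases hXY.mem_of_adj hadj with ⟨hX, hY⟩ | ⟨hY, hX⟩ <;> simp [*]
  have hXY_card : #{v ∈ s | v ∈ X} + #{v ∈ s | v ∈ Y} ≤ #s := by
    rw [← card_union_of_disjoint
      (disjoint_filter.2 fun v _ hX hY => Set.disjoint_left.1 hXY.disjoint hX hY)]
    exact card_le_card (union_subset (filter_subset _ _) (filter_subset _ _))
  have hcard := (card_le_card hsub).trans (card_union_le _ _)
  rw [card_product, card_product] at hcard
  nlinarith [sq_nonneg ((#{v ∈ s | v ∈ X} : ℤ) - #{v ∈ s | v ∈ Y}),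
    Nat.pow_le_pow_left hXY_card 2]

theorem card_interedges_le_ncard_of_forall_not_adj_deleteEdges [Finite V] (Fe : Set (Sym2 V))
    {s t : Finset V} (hst : Disjoint s t)
    (hcut : ∀ x ∈ s, ∀ y ∈ t, ¬(G.deleteEdges Fe).Adj x y) :
    #(G.interedges s t) ≤ Fe.ncard := by
  rw [← Set.ncard_coe_finset]
  refine Set.ncard_le_ncard_of_injOn (fun p => s(p.1, p.2)) ?_ ?_ Fe.toFinite
  · intro p hp
    obtain ⟨hp₁, hp₂, hadj⟩ := (mem_interedges_iff _).1 hp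
    simpa [hadj] using hcut _ hp₁ _ hp₂
  · rintro ⟨a, b⟩ hp ⟨a', b'⟩ hq hpq
    obtain ⟨ha, hb, -⟩ := (mem_interedges_iff _).1 hp
    obtain ⟨ha', -, -⟩ := (mem_interedges_iff _).1 hq
    rcases Sym2.eq_iff.1 hpq with ⟨rfl, rfl⟩ | ⟨rfl, rfl⟩
    · rfl
    · exact (Finset.disjoint_left.1 hst ha' hb).elim

theorem IsRegularOfDegree.exists_adj_deleteEdges_symmDiff [Fintype V] [DecidableEq V] {d h : ℕ}
    (hreg : G.IsRegularOfDegree d) (hbip : G.IsBipartite) (hh : 1 ≤ h) {Fe : Set (Sym2 V)}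
    (hFe : Fe.ncard ≤ h) {F₁ F₂ : Finset V} (hne : F₁ ≠ F₂) (h₁ : #F₁ + h ≤ d)
    (h₂ : #F₂ + h ≤ d) :
    ∃ x ∉ F₁ ∪ F₂, ∃ y ∈ symmDiff F₁ F₂, (G.deleteEdges Fe).Adj x y := by
  by_contra! hcut
  set S := symmDiff F₁ F₂
  have hS : 0 < #S := card_pos.2 (symmDiff_nonempty.2 hne)
  have hdeg : #S * d = #(G.interedges S S) + #(G.interedges S (F₁ ∩ F₂))
      + #(G.interedges S (F₁ ∪ F₂)ᶜ) := by
    have hdisj : Disjoint S (F₁ ∩ F₂) := disjoint_symmDiff_inf F₁ F₂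
    have hunion : S ∪ (F₁ ∩ F₂) = F₁ ∪ F₂ := symmDiff_sup_inf F₁ F₂
    rw [← card_interedges_union_right _ hdisj, hunion,
      ← card_interedges_union_right _ disjoint_compl_right, union_compl, card_interedges_univ,
      sum_const_nat fun v _ => hreg.degree_eq v]
  have hSS := hbip.two_mul_card_interedges_self_le S
  have hSC := G.card_interedges_le_mul S (F₁ ∩ F₂)
  have hSO : #(G.interedges S (F₁ ∪ F₂)ᶜ) ≤ Fe.ncard :=
    card_interedges_le_ncard_of_forall_not_adj_deleteEdges Fe
      (disjoint_compl_right.mono_left symmDiff_le_sup)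
      fun y hy x hx => fun hadj => hcut x (mem_compl.1 hx) y hy hadj.symm
  have hSab : #S = #(F₁ \ F₂) + #(F₂ \ F₁) := card_union_of_disjoint disjoint_sdiff_sdiff
  have ha := card_sdiff_add_card_inter F₁ F₂
  have hb := card_sdiff_add_card_inter F₂ F₁
  rw [inter_comm] at hb
  have hcount := sq_add_two_mul_add_two_mul_lt_two_mul (c := #(F₁ ∩ F₂)) (hSab ▸ hS) hh
    (ha ▸ h₁) (hb ▸ h₂)
  rw [← hSab] at hcount
  linarith

end SimpleGraph

namespace Qn

variable {n : ℕ}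

theorem adj_iff {u v : Fin n → Bool} :
    (Qn n).Adj u v ↔ ∃ i, v = Function.update u i (!u i) := by
  change #{j | u j ≠ v j} = 1 ↔ _
  simp only [card_eq_one, Finset.ext_iff, mem_filter, mem_univ, true_and, mem_singleton,
    funext_iff]
  refine exists_congr fun i => forall_congr' fun j => ?_
  rcases eq_or_ne j i with rfl | hji
  · cases u j <;> cases v j <;> simp
  · simp [hji, eq_comm]

theorem isRegularOfDegree : (Qn n).IsRegularOfDegree n := by
  intro u
  have hinj : Function.Injective fun i => Function.update u i (!u i) := by
    intro i j hij
    by_contra hne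
    simpa [Function.update_of_ne hne] using congrFun hij i
  rw [← SimpleGraph.card_neighborFinset_eq_degree,
    show (Qn n).neighborFinset u = univ.image fun i => Function.update u i (!u i) by
      ext v; simp [adj_iff, eq_comm],
    card_image_of_injective _ hinj, card_univ, Fintype.card_fin]

def parity (u : Fin n → Bool) : ZMod 2 := ∑ i, (u i).toNat

theorem parity_add_parity (u v : Fin n → Bool) :
    parity u + parity v = hammingDist u v := by
  rw [parity, parity, ← sum_add_distrib, hammingDist, natCast_card_filter]
  refine sum_congr rfl fun i _ => ?_
  cases u i <;> cases v i <;> decide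

theorem isBipartite : (Qn n).IsBipartite :=
  ⟨.mk parity fun {u v} huv => by
    have h := parity_add_parity u v
    rw [show hammingDist u v = 1 from huv, Nat.cast_one] at h
    intro heq
    rw [heq, CharTwo.add_self_eq_zero] at h
    exact zero_ne_one h⟩

end Qn

theorem Qn_h_edge_tolerable_diagnosable_general (n h : ℕ) (hh1 : 1 ≤ h)
    (hhn : h ≤ n - 1) :
    ∀ (Fe : Set (Sym2 (Fin n → Bool))), Fe ⊆ (Qn n).edgeSet → Fe.ncard ≤ h →
    ∀ (F₁ F₂ : Set (Fin n → Bool)), F₁ ≠ F₂ →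
      F₁.ncard ≤ n - h → F₂.ncard ≤ n - h →
      ∃ x, x ∉ F₁ ∪ F₂ ∧ ∃ y ∈ symmDiff F₁ F₂, ((Qn n).deleteEdges Fe).Adj x y := by
  intro Fe _ hFe F₁ F₂ hne h₁ h₂
  lift F₁ to Finset (Fin n → Bool) using F₁.toFinite
  lift F₂ to Finset (Fin n → Bool) using F₂.toFinite
  rw [Set.ncard_coe_finset] at h₁ h₂
  obtain ⟨x, hx, y, hy, hxy⟩ := Qn.isRegularOfDegree.exists_adj_deleteEdges_symmDiff
    Qn.isBipartite hh1 hFe (mt (congrArg _) hne) (by omega : #F₁ + h ≤ n)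
    (by omega : #F₂ + h ≤ n)
  exact ⟨x, by simpa using hx, y, by simpa [← Finset.coe_symmDiff] using hy, hxy⟩

theorem Qn_h_edge_tolerable_diagnosable (n h : ℕ) (hn : 3 ≤ n) (hh1 : 1 ≤ h)
    (hhn : h ≤ n - 1) :
    ∀ (Fe : Set (Sym2 (Fin n → Bool))), Fe ⊆ (Qn n).edgeSet → Fe.ncard ≤ h →
    ∀ (F₁ F₂ : Set (Fin n → Bool)), F₁ ≠ F₂ →
      F₁.ncard ≤ n - h → F₂.ncard ≤ n - h →
      ∃ x, x ∉ F₁ ∪ F₂ ∧ ∃ y ∈ symmDiff F₁ F₂, ((Qn n).deleteEdges Fe).Adj x y :=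
  Qn_h_edge_tolerable_diagnosable_general n h hh1 hhn
end
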